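/- Let μ, λ > 0 and define Q₃(A) = 2μ|sym A|² + λ Tr(sym A)² for A ∈ ℝ^{3×3} and Q₂(B) = 2μ(|sym([B]_{2×2})|² + Tr(sym([B]_{2×2}))²) for B ∈ ℝ^{3×2}. Then Q₂(B) = min over d ∈ ℝ³ of { Q₃((B, d)) : Tr((B, d)) = 0 }, where (B,d) denotes the 3×3 matrix with first two columns B and third column d. -/

import Mathlib

open Matrix

/-- Squared Frobenius norm of a 3×3 real matrix. -/
noncomputable def frobSq3 (A : Matrix (Fin 3) (Fin 3) ℝ) : ℝ := ∑ i, ∑ j, (A i j) ^ 2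

/-- Squared Frobenius norm of a 2×2 real matrix. -/
noncomputable def frobSq2 (A : Matrix (Fin 2) (Fin 2) ℝ) : ℝ := ∑ i, ∑ j, (A i j) ^ 2

/-- Symmetric part of a 3×3 matrix. -/
noncomputable def sym3 (A : Matrix (Fin 3) (Fin 3) ℝ) : Matrix (Fin 3) (Fin 3) ℝ :=
  (1 / 2 : ℝ) • (A + Aᵀ)

/-- Symmetric part of a 2×2 matrix. -/
noncomputable def sym2 (A : Matrix (Fin 2) (Fin 2) ℝ) : Matrix (Fin 2) (Fin 2) ℝ :=
  (1 / 2 : ℝ) • (A + Aᵀ)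

/-- The quadratic form of 3D linear elasticity: `Q₃(A) = 2μ|sym A|² + λ Tr(sym A)²`. -/
noncomputable def Q3form (μ lam : ℝ) (A : Matrix (Fin 3) (Fin 3) ℝ) : ℝ :=
  2 * μ * frobSq3 (sym3 A) + lam * (sym3 A).trace ^ 2

/-- The 2×2 submatrix consisting of the first two rows of a 3×2 matrix. -/
def top2 (B : Matrix (Fin 3) (Fin 2) ℝ) : Matrix (Fin 2) (Fin 2) ℝ :=
  Matrix.of fun i j => B i.castSucc j

/-- The incompressible-plate quadratic form
`Q₂(B) = 2μ(|sym [B]_{2×2}|² + Tr(sym [B]_{2×2})²)`. -/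
noncomputable def Q2form (μ : ℝ) (B : Matrix (Fin 3) (Fin 2) ℝ) : ℝ :=
  2 * μ * (frobSq2 (sym2 (top2 B)) + (sym2 (top2 B)).trace ^ 2)

/-- The 3×3 matrix `(B, d)` with first two columns `B` and third column `d`. -/
def appendCol (B : Matrix (Fin 3) (Fin 2) ℝ) (d : Fin 3 → ℝ) : Matrix (Fin 3) (Fin 3) ℝ :=
  Matrix.of fun i j => if h : (j : ℕ) < 2 then B i ⟨j, h⟩ else d i
/-- `Q₂(B)` is the minimum of `Q₃((B,d))` over all `d ∈ ℝ³` with `Tr((B,d)) = 0`. -/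
theorem Q2_is_constrained_min_of_Q3 (μ lam : ℝ) (hμ : 0 < μ) (hlam : 0 < lam)
    (B : Matrix (Fin 3) (Fin 2) ℝ) :
    IsLeast {x : ℝ | ∃ d : Fin 3 → ℝ, (appendCol B d).trace = 0 ∧ x = Q3form μ lam (appendCol B d)}
      (Q2form μ B) := by
  constructor
  · refine ⟨![-(B 2 0), -(B 2 1), -(B 0 0 + B 1 1)], ?_, ?_⟩
    · simp [appendCol, Matrix.trace, Fin.sum_univ_succ, Matrix.diag]
    · simp only [Q3form, Q2form, frobSq3, frobSq2, sym3, sym2, top2, appendCol,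
        Matrix.trace, Matrix.diag, Fin.sum_univ_succ, Fin.sum_univ_zero,
        Matrix.smul_apply, Matrix.add_apply, Matrix.transpose_apply, Matrix.of_apply,
        smul_eq_mul]
      norm_num [Fin.ext_iff]
      simp only [Matrix.cons_val]
      ring
  · rintro x ⟨d, htr, rfl⟩
    have htr' : d 2 = -(B 0 0 + B 1 1) := by
      simp [appendCol, Matrix.trace, Fin.sum_univ_succ, Matrix.diag] at htr
      linarith
    simp only [Q3form, Q2form, frobSq3, frobSq2, sym3, sym2, top2, appendCol,
        Matrix.trace, Matrix.diag, Fin.sum_univ_succ, Fin.sum_univ_zero,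
        Matrix.smul_apply, Matrix.add_apply, Matrix.transpose_apply, Matrix.of_apply,
        smul_eq_mul]
    norm_num [Fin.ext_iff, htr']
    nlinarith [sq_nonneg (B 2 0 + d 0), sq_nonneg (B 2 1 + d 1), hμ.le, mul_pos hμ hlam,
      mul_nonneg hμ.le (sq_nonneg (B 2 0 + d 0)), mul_nonneg hμ.le (sq_nonneg (B 2 1 + d 1))]
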